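/- arXiv:0901.4238 — 2 statements merged into one kernel-verified Lean document; each statement's English description precedes it below -/
import Mathlib

section
/- Let X be a complete normed space (Banach space), let C > 0, κ > 0, and let r ≥ 3 be a real number. Set δ = κ / r². Then there exists μ ∈ (0,1), depending only on C and r, with the following property: for every T with 0 < T ≤ 1 and T^δ ≤ μ, setting λ = μ T^{−δ} (so that λ ≥ 1), every map K : X → X satisfying (i) ‖K(v)‖ ≤ C T^κ ( λ^r + ‖v‖^r ) for all v ∈ X with ‖v‖ ≤ 2Cλ^r, and (ii) ‖K(v₁) − K(v₂)‖ ≤ C T^κ ‖v₁ − v₂‖ ( λ^{r−1} + ‖v₁‖^{r−1} + ‖v₂‖^{r−1} ) for all v₁, v₂ ∈ X with ‖v₁‖, ‖v₂‖ ≤ 2Cλ^r, maps the closed ball B = { v ∈ X : ‖v‖ ≤ 2Cλ^r } into itself, is a contraction on B (with Lipschitz constant at most 1/2), and hence has a unique fixed point in B. -/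
/-!
Write `t = T^κ` and `R = 2Cλ^r`. The choice `λ = μ T^{-δ}` with `δ = κ/r²` is made so that
`t λ^{r²} = μ^{r²} ≤ μ`; every power of `λ` or of `R` that occurs has exponent at most `r²`,
so all terms `t λ^r`, `t R^r`, `t λ^{r-1}`, `t R^{r-1}` are `O(μ)` with constants depending on
`C` and `r` only. Taking `μ` small makes `K` map the ball of radius `R` into itself and be
`1/2`-Lipschitz there, and Banach's fixed-point theorem concludes.
-/

open Set Metric

theorem IsComplete.existsUnique_fixedPoint_of_mapsTo {α : Type*} [MetricSpace α] {s : Set α}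
    (hsc : IsComplete s) (hne : s.Nonempty) {f : α → α} (hsf : MapsTo f s s) {q : ℝ}
    (hq : q < 1) (hf : ∀ x ∈ s, ∀ y ∈ s, dist (f x) (f y) ≤ q * dist x y) :
    ∃! x, x ∈ s ∧ f x = x := by
  have : CompleteSpace s := hsc.completeSpace_coe
  have : Nonempty s := hne.to_subtype
  have hg : ContractingWith (Real.toNNReal q) (hsf.restrict f s s) :=
    ⟨by simpa using hq, (LipschitzOnWith.of_dist_le' hf).mapsToRestrict hsf⟩
  refine ⟨(ContractingWith.fixedPoint _ hg).1,
    ⟨Subtype.prop _, congrArg Subtype.val hg.fixedPoint_isFixedPt⟩, ?_⟩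
  rintro y ⟨hy, hfy⟩
  exact congrArg Subtype.val (hg.fixedPoint_unique (x := ⟨y, hy⟩) (Subtype.ext hfy))

theorem rpow_mul_mul_rpow_neg_div_rpow {T μ κ s : ℝ} (hT : 0 < T) (hμ : 0 ≤ μ) (hs : s ≠ 0) :
    T ^ κ * (μ * T ^ (-(κ / s))) ^ s = μ ^ s := by
  rw [Real.mul_rpow hμ (by positivity), ← Real.rpow_mul hT.le, neg_mul,
    div_mul_cancel₀ κ hs, Real.rpow_neg hT.le]
  field_simp

theorem exists_pos_lt_one_mul_le_two_and_mul_le_half {a b : ℝ} (ha : 0 ≤ a) (hb : 0 ≤ b) :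
    ∃ μ : ℝ, 0 < μ ∧ μ < 1 ∧ a * μ ≤ 2 ∧ b * μ ≤ 1 / 2 := by
  have hμ : (1 + a + b) * (2 * (1 + a + b))⁻¹ = 1 / 2 := by field_simp
  refine ⟨(2 * (1 + a + b))⁻¹, by positivity, inv_lt_one_of_one_lt₀ (by linarith), ?_, ?_⟩ <;>
    nlinarith [inv_pos.mpr (by positivity : 0 < 2 * (1 + a + b))]

theorem one_le_mul_rpow_neg {T μ δ : ℝ} (hT : 0 < T) (hTμ : T ^ δ ≤ μ) : 1 ≤ μ * T ^ (-δ) := by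
  rw [Real.rpow_neg hT.le, ← div_eq_mul_inv, one_le_div (by positivity)]
  exact hTμ

section

variable {C r t lam ε : ℝ}

theorem mul_rpow_le_of_exponent_le {a b : ℝ} (ht : 0 ≤ t) (hlam : 1 ≤ lam) (hab : a ≤ b)
    (h : t * lam ^ b ≤ ε) : t * lam ^ a ≤ ε :=
  (mul_le_mul_of_nonneg_left (Real.rpow_le_rpow_of_exponent_le hlam hab) ht).trans h

theorem mul_rpow_le_of_le_radius {c p x : ℝ} (hc : 0 ≤ c) (hr : 0 ≤ r) (ht : 0 ≤ t)
    (hlam : 1 ≤ lam) (hε : t * lam ^ r ^ 2 ≤ ε) (hp : 0 ≤ p) (hpr : p ≤ r) (hx : 0 ≤ x)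
    (hxR : x ≤ c * lam ^ r) : t * x ^ p ≤ c ^ p * ε := by
  have hlamr : 0 ≤ lam ^ r := by positivity
  calc t * x ^ p ≤ t * (c * lam ^ r) ^ p := by gcongr
    _ = c ^ p * (t * lam ^ (r * p)) := by
      rw [Real.mul_rpow (by positivity) hlamr, ← Real.rpow_mul (by linarith)]; ring
    _ ≤ c ^ p * ε := by
      gcongr
      exact mul_rpow_le_of_exponent_le ht hlam (by nlinarith) hε

variable {X : Type*} [NormedAddCommGroup X] {K : X → X}

theorem mapsTo_closedBall_of_norm_le_mul_add_rpow (hC : 0 ≤ C) (hr : 1 ≤ r) (ht : 0 ≤ t)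
    (hlam : 1 ≤ lam) (hε : t * lam ^ r ^ 2 ≤ ε) (hεC : (1 + (2 * C) ^ r) * ε ≤ 2)
    (hK : ∀ v : X, ‖v‖ ≤ 2 * C * lam ^ r → ‖K v‖ ≤ C * t * (lam ^ r + ‖v‖ ^ r)) :
    MapsTo K (closedBall 0 (2 * C * lam ^ r)) (closedBall 0 (2 * C * lam ^ r)) := by
  intro v hv
  rw [mem_closedBall_zero_iff] at hv ⊢
  have hlamr : t * lam ^ r ≤ ε := mul_rpow_le_of_exponent_le ht hlam (by nlinarith) hε
  have hvr := mul_rpow_le_of_le_radius (by linarith) (by linarith) ht hlam hε (by linarith)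
    le_rfl (norm_nonneg v) hv
  have hlam1 : 1 ≤ lam ^ r := Real.one_le_rpow hlam (by linarith)
  calc ‖K v‖ ≤ C * (t * lam ^ r + t * ‖v‖ ^ r) := by linarith [hK v hv]
    _ ≤ C * ((1 + (2 * C) ^ r) * ε) := by gcongr; linarith
    _ ≤ 2 * C * lam ^ r := by nlinarith

theorem norm_sub_le_half_of_norm_sub_le_mul (hC : 0 ≤ C) (hr : 1 ≤ r) (ht : 0 ≤ t)
    (hlam : 1 ≤ lam) (hε : t * lam ^ r ^ 2 ≤ ε)
    (hεC : C * (1 + 2 * (2 * C) ^ (r - 1)) * ε ≤ 1 / 2)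
    (hK : ∀ v₁ v₂ : X, ‖v₁‖ ≤ 2 * C * lam ^ r → ‖v₂‖ ≤ 2 * C * lam ^ r →
      ‖K v₁ - K v₂‖ ≤ C * t * ‖v₁ - v₂‖ * (lam ^ (r - 1) + ‖v₁‖ ^ (r - 1) + ‖v₂‖ ^ (r - 1)))
    {v₁ v₂ : X} (hv₁ : ‖v₁‖ ≤ 2 * C * lam ^ r) (hv₂ : ‖v₂‖ ≤ 2 * C * lam ^ r) :
    ‖K v₁ - K v₂‖ ≤ 1 / 2 * ‖v₁ - v₂‖ := by
  have hlamr : t * lam ^ (r - 1) ≤ ε := mul_rpow_le_of_exponent_le ht hlam (by nlinarith) hε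
  have h₁ := mul_rpow_le_of_le_radius (p := r - 1) (by linarith) (by linarith) ht hlam hε
    (by linarith) (by linarith) (norm_nonneg v₁) hv₁
  have h₂ := mul_rpow_le_of_le_radius (p := r - 1) (by linarith) (by linarith) ht hlam hε
    (by linarith) (by linarith) (norm_nonneg v₂) hv₂
  have hfactor : C * t * (lam ^ (r - 1) + ‖v₁‖ ^ (r - 1) + ‖v₂‖ ^ (r - 1)) ≤ 1 / 2 :=
    calc C * t * (lam ^ (r - 1) + ‖v₁‖ ^ (r - 1) + ‖v₂‖ ^ (r - 1))
        = C * (t * lam ^ (r - 1) + t * ‖v₁‖ ^ (r - 1) + t * ‖v₂‖ ^ (r - 1)) := by ring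
      _ ≤ C * (1 + 2 * (2 * C) ^ (r - 1)) * ε := by nlinarith
      _ ≤ 1 / 2 := hεC
  calc ‖K v₁ - K v₂‖
      ≤ C * t * (lam ^ (r - 1) + ‖v₁‖ ^ (r - 1) + ‖v₂‖ ^ (r - 1)) * ‖v₁ - v₂‖ := by
        linarith [hK v₁ v₂ hv₁ hv₂]
    _ ≤ 1 / 2 * ‖v₁ - v₂‖ := by gcongr

end

theorem stmt_6_general (X : Type*) [NormedAddCommGroup X] [CompleteSpace X]
    (C κ r : ℝ) (hC : 0 < C) (hr : 3 ≤ r) :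
    ∃ μ : ℝ, 0 < μ ∧ μ < 1 ∧
    ∀ T : ℝ, 0 < T → T ≤ 1 → T ^ (κ / r ^ 2) ≤ μ →
    ∀ lam : ℝ, lam = μ * T ^ (-(κ / r ^ 2)) →
      1 ≤ lam ∧
      ∀ K : X → X,
        (∀ v : X, ‖v‖ ≤ 2 * C * lam ^ r →
          ‖K v‖ ≤ C * T ^ κ * (lam ^ r + ‖v‖ ^ r)) →
        (∀ v₁ v₂ : X, ‖v₁‖ ≤ 2 * C * lam ^ r → ‖v₂‖ ≤ 2 * C * lam ^ r →
          ‖K v₁ - K v₂‖ ≤ C * T ^ κ * ‖v₁ - v₂‖ *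
            (lam ^ (r - 1) + ‖v₁‖ ^ (r - 1) + ‖v₂‖ ^ (r - 1))) →
        (∀ v ∈ Metric.closedBall (0 : X) (2 * C * lam ^ r),
            K v ∈ Metric.closedBall (0 : X) (2 * C * lam ^ r)) ∧
        (∀ v₁ ∈ Metric.closedBall (0 : X) (2 * C * lam ^ r),
          ∀ v₂ ∈ Metric.closedBall (0 : X) (2 * C * lam ^ r),
            ‖K v₁ - K v₂‖ ≤ (1 / 2) * ‖v₁ - v₂‖) ∧
        (∃! v, v ∈ Metric.closedBall (0 : X) (2 * C * lam ^ r) ∧ K v = v) := by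
  obtain ⟨μ, hμ0, hμ1, hμ₁, hμ₂⟩ := exists_pos_lt_one_mul_le_two_and_mul_le_half
    (a := 1 + (2 * C) ^ r) (b := C * (1 + 2 * (2 * C) ^ (r - 1))) (by positivity) (by positivity)
  refine ⟨μ, hμ0, hμ1, fun T hT _ hTμ lam hlam => ?_⟩
  have hlam1 : 1 ≤ lam := hlam ▸ one_le_mul_rpow_neg hT hTμ
  have hε : T ^ κ * lam ^ r ^ 2 ≤ μ := by
    rw [hlam, rpow_mul_mul_rpow_neg_div_rpow hT hμ0.le (by positivity)]
    exact Real.rpow_le_self_of_le_one hμ0.le hμ1.le (by nlinarith)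
  refine ⟨hlam1, fun K hK₁ hK₂ => ?_⟩
  have hmaps := mapsTo_closedBall_of_norm_le_mul_add_rpow hC.le (by linarith) (by positivity)
    hlam1 hε hμ₁ hK₁
  have hcontr : ∀ v₁ ∈ closedBall (0 : X) (2 * C * lam ^ r),
      ∀ v₂ ∈ closedBall (0 : X) (2 * C * lam ^ r), ‖K v₁ - K v₂‖ ≤ 1 / 2 * ‖v₁ - v₂‖ :=
    fun v₁ hv₁ v₂ hv₂ => norm_sub_le_half_of_norm_sub_le_mul hC.le (by linarith) (by positivity)
      hlam1 hε hμ₂ hK₂ (mem_closedBall_zero_iff.mp hv₁) (mem_closedBall_zero_iff.mp hv₂)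
  refine ⟨hmaps, hcontr, isClosed_closedBall.isComplete.existsUnique_fixedPoint_of_mapsTo
    ⟨0, mem_closedBall_self (by positivity)⟩ hmaps (q := 1 / 2) (by norm_num) ?_⟩
  simpa only [dist_eq_norm] using hcontr

/-- Deterministic fixed-point core of the proof of Proposition 2.4. -/
theorem stmt_6 (X : Type*) [NormedAddCommGroup X] [NormedSpace ℝ X] [CompleteSpace X]
    (C κ r : ℝ) (hC : 0 < C) (hκ : 0 < κ) (hr : 3 ≤ r) :
    ∃ μ : ℝ, 0 < μ ∧ μ < 1 ∧
    ∀ T : ℝ, 0 < T → T ≤ 1 → T ^ (κ / r ^ 2) ≤ μ →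
    ∀ lam : ℝ, lam = μ * T ^ (-(κ / r ^ 2)) →
      1 ≤ lam ∧
      ∀ K : X → X,
        (∀ v : X, ‖v‖ ≤ 2 * C * lam ^ r →
          ‖K v‖ ≤ C * T ^ κ * (lam ^ r + ‖v‖ ^ r)) →
        (∀ v₁ v₂ : X, ‖v₁‖ ≤ 2 * C * lam ^ r → ‖v₂‖ ≤ 2 * C * lam ^ r →
          ‖K v₁ - K v₂‖ ≤ C * T ^ κ * ‖v₁ - v₂‖ *
            (lam ^ (r - 1) + ‖v₁‖ ^ (r - 1) + ‖v₂‖ ^ (r - 1))) →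
        (∀ v ∈ Metric.closedBall (0 : X) (2 * C * lam ^ r),
            K v ∈ Metric.closedBall (0 : X) (2 * C * lam ^ r)) ∧
        (∀ v₁ ∈ Metric.closedBall (0 : X) (2 * C * lam ^ r),
          ∀ v₂ ∈ Metric.closedBall (0 : X) (2 * C * lam ^ r),
            ‖K v₁ - K v₂‖ ≤ (1 / 2) * ‖v₁ - v₂‖) ∧
        (∃! v, v ∈ Metric.closedBall (0 : X) (2 * C * lam ^ r) ∧ K v = v) :=
  stmt_6_general X C κ r hC hr
end

section
/- Let d ≥ 1 and 0 < T ≤ 1. Let v : ℝ × ℝ^d → ℂ be continuously differentiable in the time variable and twice continuously differentiable in the space variable, and suppose that for all (s, y) ∈ [0, arctan T] × ℝ^d: i ∂_s v(s,y) + (1/2) Δ v(s,y) − (1/2)|y|² v(s,y) = 0. Define, for (t,x) ∈ [0,T] × ℝ^d, u(t,x) = (1 + t²)^{−d/4} v( arctan t, x / √(1+t²) ) exp( i |x|² t / (2(1+t²)) ). Then for all (t,x) ∈ [0,T] × ℝ^d: i ∂_t u(t,x) + (1/2) Δ u(t,x) = 0, and u(0, ·) = v(0, ·). -/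
/-!
The lens transform intertwines the two Schrödinger operators: writing `ρ = 1 + t²`,
`y = x / √ρ` and `φ = |x|² t / (2ρ)`, every sufficiently smooth `v` satisfies
`(i∂ₜ + ½Δ) 𝓛₀v (t, x) = ρ^(-d/4 - 1) e^{iφ} ((i∂ₛ + ½Δ - ½|y|²) v)(arctan t, y)`.
The time derivative comes from the chain rule along `t ↦ (arctan t, y)`; the Laplacian of the
product of `g = v(arctan t, · / √ρ)` with the Gaussian phase `e^{β|x|²}`, `β = it / (2ρ)`, is
`e^{β|x|²} (Δg + 4β x·∇g + (2dβ + 4β²|x|²) g)`. The gradient terms and the terms of order `d`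
cancel, and the two potential terms `|x|²(1 - t²)/(2ρ²)` (from `∂ₜφ`) and `t²|x|²/(2ρ²)`
(from `4β²|x|²`) add up to `½|y|²/ρ`.
-/

/-- Coordinatewise Laplacian of a function on `ℝ^d`: the sum of the second derivatives along
the coordinate directions. -/
noncomputable def coordLaplacian {d : ℕ} (f : EuclideanSpace ℝ (Fin d) → ℂ)
    (x : EuclideanSpace ℝ (Fin d)) : ℂ :=
  ∑ i : Fin d, deriv (deriv (fun h : ℝ => f (x + h • EuclideanSpace.single i (1 : ℝ)))) 0

open Complex

theorem deriv_deriv_mul {𝕜 𝔸 : Type*} [NontriviallyNormedField 𝕜] [NormedRing 𝔸]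
    [NormedAlgebra 𝕜 𝔸] {f g : 𝕜 → 𝔸} {x : 𝕜} (hf : ContDiffAt 𝕜 2 f x)
    (hg : ContDiffAt 𝕜 2 g x) :
    deriv (deriv (fun y => f y * g y)) x
      = deriv (deriv f) x * g x + 2 * (deriv f x * deriv g x) + f x * deriv (deriv g) x := by
  have h := iteratedDeriv_mul hf hg
  simp only [iteratedDeriv_succ, iteratedDeriv_zero, Finset.sum_range_succ, Finset.range_one,
    Finset.sum_singleton, Nat.choose_zero_right, Nat.choose_succ_self_right, Nat.choose_self,
    one_add_one_eq_two, Nat.cast_one, Nat.cast_ofNat, one_mul, tsub_zero, Nat.add_one_sub_one,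
    tsub_self] at h
  rw [show (fun y => f y * g y) = f * g from rfl, h]
  noncomm_ring

theorem deriv_deriv_comp_mul_left {𝕜 F : Type*} [NontriviallyNormedField 𝕜]
    [NormedAddCommGroup F] [NormedSpace 𝕜 F] (c : 𝕜) (f : 𝕜 → F) (x : 𝕜) :
    deriv (deriv (fun y => f (c * y))) x = c ^ 2 • deriv (deriv f) (c * x) := by
  rw [funext (deriv_comp_mul_left c f), deriv_fun_const_smul_field,
    deriv_comp_mul_left, smul_smul, sq]

theorem contDiffAt_line {E F : Type*} [NormedAddCommGroup E] [NormedSpace ℝ E]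
    [NormedAddCommGroup F] [NormedSpace ℝ F] {n : WithTop ℕ∞} {f : E → F} {x : E}
    (hf : ContDiffAt ℝ n f x) (w : E) :
    ContDiffAt ℝ n (fun h : ℝ => f (x + h • w)) 0 := by
  refine ContDiffAt.comp (g := f) 0 (by simpa using hf) ?_
  fun_prop

theorem DifferentiableAt.hasDerivAt_comp_prodMk {E F : Type*} [NormedAddCommGroup E]
    [NormedSpace ℝ E] [NormedAddCommGroup F] [NormedSpace ℝ F] {v : ℝ → E → F} {σ : ℝ → ℝ}
    {c : ℝ → E} {σ' t : ℝ} {c' : E}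
    (hv : DifferentiableAt ℝ (fun p : ℝ × E => v p.1 p.2) (σ t, c t))
    (hσ : HasDerivAt σ σ' t) (hc : HasDerivAt c c' t) :
    HasDerivAt (fun t => v (σ t) (c t))
      (σ' • deriv (fun s => v s (c t)) (σ t) + fderiv ℝ (v (σ t)) (c t) c') t := by
  set L := fderiv ℝ (fun p : ℝ × E => v p.1 p.2) (σ t, c t)
  have hL := hv.hasFDerivAt
  have hfst : deriv (fun s => v s (c t)) (σ t) = L (1, 0) := by
    have hline : HasDerivAt (fun s : ℝ => (s, c t)) ((1 : ℝ), (0 : E)) (σ t) :=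
      (hasDerivAt_id _).prodMk (hasDerivAt_const _ _)
    exact (hL.comp_hasDerivAt (σ t) hline).deriv
  have hsnd : fderiv ℝ (v (σ t)) (c t) = L.comp (ContinuousLinearMap.inr ℝ ℝ E) :=
    (hL.comp (c t) (hasFDerivAt_prodMk_right (σ t) (c t))).fderiv
  have hsplit : ((σ', c') : ℝ × E) = σ' • ((1, 0) : ℝ × E) + (0, c') := by simp
  refine (hL.comp_hasDerivAt t (hσ.prodMk hc)).congr_deriv ?_
  rw [hfst, hsnd, hsplit, map_add, map_smul]
  rfl

section Gaussian

variable {E : Type*} [NormedAddCommGroup E] [InnerProductSpace ℝ E] (β : ℂ)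

theorem contDiff_cexp_mul_norm_sq {n : WithTop ℕ∞} :
    ContDiff ℝ n (fun y : E => cexp (β * ((‖y‖ ^ 2 : ℝ) : ℂ))) :=
  (contDiff_const.mul (ofRealCLM.contDiff.comp (contDiff_norm_sq ℝ))).cexp

theorem hasDerivAt_cexp_mul_norm_sq_line (x w : E) (h : ℝ) :
    HasDerivAt (fun h : ℝ => cexp (β * ((‖x + h • w‖ ^ 2 : ℝ) : ℂ)))
      (cexp (β * ((‖x + h • w‖ ^ 2 : ℝ) : ℂ)) * (β * (2 * inner ℝ (x + h • w) w : ℝ))) h := by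
  have hline : HasDerivAt (fun h : ℝ => x + h • w) w h := by
    simpa using ((hasDerivAt_id h).smul_const w).const_add x
  exact ((hline.norm_sq.ofReal_comp).const_mul β).cexp

theorem fderiv_cexp_mul_norm_sq_apply (x w : E) :
    fderiv ℝ (fun y : E => cexp (β * ((‖y‖ ^ 2 : ℝ) : ℂ))) x w
      = cexp (β * ((‖x‖ ^ 2 : ℝ) : ℂ)) * (β * (2 * inner ℝ x w : ℝ)) := by
  rw [← ((contDiff_cexp_mul_norm_sq (n := 1) β).differentiable one_ne_zero
    x).lineDeriv_eq_fderiv, lineDeriv, (hasDerivAt_cexp_mul_norm_sq_line β x w 0).deriv]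
  simp

theorem deriv_deriv_cexp_mul_norm_sq_line (x w : E) :
    deriv (deriv (fun h : ℝ => cexp (β * ((‖x + h • w‖ ^ 2 : ℝ) : ℂ)))) 0
      = cexp (β * ((‖x‖ ^ 2 : ℝ) : ℂ)) *
          ((β * (2 * inner ℝ x w : ℝ)) ^ 2 + 2 * β * (‖w‖ ^ 2 : ℝ)) := by
  have hderiv : deriv (fun h : ℝ => cexp (β * ((‖x + h • w‖ ^ 2 : ℝ) : ℂ))) = fun h : ℝ =>
      cexp (β * ((‖x + h • w‖ ^ 2 : ℝ) : ℂ)) * (β * (2 * inner ℝ (x + h • w) w : ℝ)) :=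
    funext fun h => (hasDerivAt_cexp_mul_norm_sq_line β x w h).deriv
  have hinner : HasDerivAt (fun h : ℝ => 2 * inner ℝ (x + h • w) w) (2 * ‖w‖ ^ 2) 0 := by
    simp only [inner_add_left, inner_smul_left, real_inner_self_eq_norm_sq]
    simpa using (((hasDerivAt_id (0 : ℝ)).mul_const (‖w‖ ^ 2)).const_add (inner ℝ x w)).const_mul 2
  rw [hderiv]
  refine ((hasDerivAt_cexp_mul_norm_sq_line β x w 0).mul
    (hinner.ofReal_comp.const_mul β)).deriv.trans ?_
  simp only [zero_smul, add_zero, ofReal_pow, ofReal_mul, ofReal_ofNat]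
  ring

end Gaussian

section Laplacian

variable {d : ℕ}

local notation "𝕖" i => EuclideanSpace.single i (1 : ℝ)

theorem EuclideanSpace.sum_smul_single_one (x : EuclideanSpace ℝ (Fin d)) :
    ∑ i, x i • (𝕖 i) = x := by
  simpa using (EuclideanSpace.basisFun (Fin d) ℝ).sum_repr x

theorem EuclideanSpace.sum_sq_apply (x : EuclideanSpace ℝ (Fin d)) :
    ∑ i, x i ^ 2 = ‖x‖ ^ 2 := by
  simp [EuclideanSpace.norm_sq_eq]

theorem coordLaplacian_const_mul (c : ℂ) (f : EuclideanSpace ℝ (Fin d) → ℂ) (x) :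
    coordLaplacian (fun y => c * f y) x = c * coordLaplacian f x := by
  simp only [coordLaplacian, deriv_const_mul_field', Finset.mul_sum]

theorem coordLaplacian_comp_smul (c : ℝ) (f : EuclideanSpace ℝ (Fin d) → ℂ) (x) :
    coordLaplacian (fun y => f (c • y)) x = (c ^ 2 : ℝ) * coordLaplacian f (c • x) := by
  rw [coordLaplacian, coordLaplacian, Finset.mul_sum]
  refine Finset.sum_congr rfl fun i _ => ?_
  have hline : (fun h : ℝ => f (c • (x + h • (𝕖 i)))) = fun h => f (c • x + (c * h) • (𝕖 i)) := by
    ext h; rw [smul_add, smul_smul]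
  rw [hline, deriv_deriv_comp_mul_left c (fun k : ℝ => f (c • x + k • (𝕖 i))) 0, mul_zero,
    Complex.real_smul]

theorem coordLaplacian_mul {f g : EuclideanSpace ℝ (Fin d) → ℂ} {x : EuclideanSpace ℝ (Fin d)}
    (hf : ContDiffAt ℝ 2 f x) (hg : ContDiffAt ℝ 2 g x) :
    coordLaplacian (fun y => f y * g y) x
      = coordLaplacian f x * g x + 2 * ∑ i, fderiv ℝ f x (𝕖 i) * fderiv ℝ g x (𝕖 i)
        + f x * coordLaplacian g x := by
  have hline : ∀ i, deriv (deriv (fun h : ℝ => f (x + h • (𝕖 i)) * g (x + h • (𝕖 i)))) 0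
      = deriv (deriv (fun h : ℝ => f (x + h • (𝕖 i)))) 0 * g x
        + 2 * (fderiv ℝ f x (𝕖 i) * fderiv ℝ g x (𝕖 i))
        + f x * deriv (deriv (fun h : ℝ => g (x + h • (𝕖 i)))) 0 := fun i => by
    rw [deriv_deriv_mul (contDiffAt_line hf _) (contDiffAt_line hg _),
      ← (hf.differentiableAt two_ne_zero).lineDeriv_eq_fderiv,
      ← (hg.differentiableAt two_ne_zero).lineDeriv_eq_fderiv]
    simp [lineDeriv]
  simp only [coordLaplacian, hline, Finset.sum_add_distrib, Finset.sum_mul, Finset.mul_sum]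

theorem coordLaplacian_cexp_mul_norm_sq (β : ℂ) (x : EuclideanSpace ℝ (Fin d)) :
    coordLaplacian (fun y => cexp (β * ((‖y‖ ^ 2 : ℝ) : ℂ))) x
      = cexp (β * ((‖x‖ ^ 2 : ℝ) : ℂ)) * (2 * d * β + 4 * β ^ 2 * (‖x‖ ^ 2 : ℝ)) := by
  have hsum : ∑ i, ((x i : ℝ) : ℂ) ^ 2 = ((‖x‖ ^ 2 : ℝ) : ℂ) := by
    exact_mod_cast EuclideanSpace.sum_sq_apply x
  simp only [coordLaplacian, deriv_deriv_cexp_mul_norm_sq_line, EuclideanSpace.inner_single_right,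
    conj_trivial, one_mul, PiLp.norm_single, norm_one, ← Finset.mul_sum]
  push_cast
  simp only [Finset.sum_add_distrib, mul_pow, ← Finset.mul_sum, hsum, ofReal_pow, one_pow, mul_one,
    Finset.sum_const, Finset.card_univ, Fintype.card_fin, nsmul_eq_mul]
  ring

theorem coordLaplacian_mul_cexp_mul_norm_sq {g : EuclideanSpace ℝ (Fin d) → ℂ}
    {x : EuclideanSpace ℝ (Fin d)} (hg : ContDiffAt ℝ 2 g x) (β : ℂ) :
    coordLaplacian (fun y => g y * cexp (β * ((‖y‖ ^ 2 : ℝ) : ℂ))) x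
      = cexp (β * ((‖x‖ ^ 2 : ℝ) : ℂ)) * (coordLaplacian g x + 4 * β * fderiv ℝ g x x
        + (2 * d * β + 4 * β ^ 2 * (‖x‖ ^ 2 : ℝ)) * g x) := by
  rw [coordLaplacian_mul hg (contDiff_cexp_mul_norm_sq β).contDiffAt,
    coordLaplacian_cexp_mul_norm_sq]
  have hsum : ∑ i, fderiv ℝ g x (𝕖 i) * ((x i : ℝ) : ℂ) = fderiv ℝ g x x := by
    calc _ = fderiv ℝ g x (∑ i, x i • (𝕖 i)) := by simp [map_sum, mul_comm]
      _ = _ := by rw [EuclideanSpace.sum_smul_single_one]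
  have hmid : ∑ i, fderiv ℝ g x (𝕖 i) * (cexp (β * ((‖x‖ ^ 2 : ℝ) : ℂ)) * (β * ((2 * (x i)) : ℝ)))
      = 2 * β * cexp (β * ((‖x‖ ^ 2 : ℝ) : ℂ)) * fderiv ℝ g x x := by
    rw [← hsum, Finset.mul_sum]
    push_cast
    exact Finset.sum_congr rfl fun i _ => by ring
  simp only [fderiv_cexp_mul_norm_sq_apply, EuclideanSpace.inner_single_right, conj_trivial,
    one_mul, hmid]
  ring

end Laplacian

/-- The lens transform `𝓛₀`. -/
noncomputable def lensTransform (d : ℕ) (v : ℝ → EuclideanSpace ℝ (Fin d) → ℂ) (t : ℝ)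
    (x : EuclideanSpace ℝ (Fin d)) : ℂ :=
  (((1 + t ^ 2) ^ (-(d : ℝ) / 4) : ℝ) : ℂ) * v (Real.arctan t) ((Real.sqrt (1 + t ^ 2))⁻¹ • x) *
    cexp (I * ((‖x‖ ^ 2 : ℝ) : ℂ) * (t : ℂ) / (2 * (1 + (t : ℂ) ^ 2)))

theorem hasDerivAt_one_add_sq_rpow (p t : ℝ) :
    HasDerivAt (fun t : ℝ => (1 + t ^ 2) ^ p) ((1 + t ^ 2) ^ p * (2 * p * t / (1 + t ^ 2))) t := by
  have hρ : (1 + t ^ 2) ≠ 0 := by positivity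
  have h := ((hasDerivAt_pow 2 t).const_add 1).rpow_const (p := p) (Or.inl hρ)
  refine h.congr_deriv ?_
  rw [Real.rpow_sub_one hρ]
  field_simp
  ring

theorem inv_sqrt_one_add_sq (t : ℝ) : (√(1 + t ^ 2))⁻¹ = (1 + t ^ 2) ^ (-(1 / 2) : ℝ) := by
  rw [Real.sqrt_eq_rpow, Real.rpow_neg (by positivity)]

theorem hasDerivAt_inv_sqrt_one_add_sq (t : ℝ) :
    HasDerivAt (fun t : ℝ => (√(1 + t ^ 2))⁻¹) (-(t / (1 + t ^ 2)) * (√(1 + t ^ 2))⁻¹) t := by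
  simp only [inv_sqrt_one_add_sq]
  refine (hasDerivAt_one_add_sq_rpow _ t).congr_deriv ?_
  ring

theorem hasDerivAt_lensPhase (r : ℂ) (t : ℝ) :
    HasDerivAt (fun t : ℝ => I * r * t / (2 * (1 + (t : ℂ) ^ 2)))
      (I * r * (1 - (t : ℂ) ^ 2) / (2 * (1 + (t : ℂ) ^ 2) ^ 2)) t := by
  have hρ : (1 + (t : ℂ) ^ 2) ≠ 0 := by exact_mod_cast (show (1 + t ^ 2) ≠ 0 by positivity)
  have hid : HasDerivAt (fun t : ℝ => (t : ℂ)) 1 t := (hasDerivAt_id t).ofReal_comp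
  have hnum := hid.const_mul (I * r)
  have hden := ((hid.fun_pow 2).const_add 1).const_mul (2 : ℂ)
  refine (hnum.div hden (mul_ne_zero two_ne_zero hρ)).congr_deriv ?_
  field_simp
  ring

section LensTransform

variable {d : ℕ}

theorem hasDerivAt_lensTransform {v : ℝ → EuclideanSpace ℝ (Fin d) → ℂ} {t : ℝ}
    {x : EuclideanSpace ℝ (Fin d)}
    (hv : DifferentiableAt ℝ (fun p : ℝ × EuclideanSpace ℝ (Fin d) => v p.1 p.2)
      (Real.arctan t, (√(1 + t ^ 2))⁻¹ • x)) :
    HasDerivAt (fun t => lensTransform d v t x)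
      ((((1 + t ^ 2) ^ (-(d : ℝ) / 4) : ℝ) : ℂ) *
          cexp (I * ((‖x‖ ^ 2 : ℝ) : ℂ) * (t : ℂ) / (2 * (1 + (t : ℂ) ^ 2))) *
        ((-(d * t) / (2 * (1 + (t : ℂ) ^ 2))
              + I * ((‖x‖ ^ 2 : ℝ) : ℂ) * (1 - (t : ℂ) ^ 2) / (2 * (1 + (t : ℂ) ^ 2) ^ 2))
            * v (Real.arctan t) ((√(1 + t ^ 2))⁻¹ • x)
          + (1 + (t : ℂ) ^ 2)⁻¹ * deriv (fun s => v s ((√(1 + t ^ 2))⁻¹ • x)) (Real.arctan t)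
          - t / (1 + (t : ℂ) ^ 2) * ((√(1 + t ^ 2))⁻¹ : ℝ)
            * fderiv ℝ (v (Real.arctan t)) ((√(1 + t ^ 2))⁻¹ • x) x)) t := by
  have hρ : (1 + (t : ℂ) ^ 2) ≠ 0 := by exact_mod_cast (show (1 + t ^ 2) ≠ 0 by positivity)
  have hamp := (hasDerivAt_one_add_sq_rpow (-(d : ℝ) / 4) t).ofReal_comp
  have hv' := hv.hasDerivAt_comp_prodMk (Real.hasDerivAt_arctan t)
    ((hasDerivAt_inv_sqrt_one_add_sq t).smul_const x)
  have hphase := (hasDerivAt_lensPhase ((‖x‖ ^ 2 : ℝ) : ℂ) t).cexp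
  refine ((hamp.mul hv').mul hphase).congr_deriv ?_
  simp only [map_smul, Complex.real_smul, Pi.mul_apply]
  push_cast
  field_simp
  ring

theorem coordLaplacian_lensTransform {v : ℝ → EuclideanSpace ℝ (Fin d) → ℂ} {t : ℝ}
    {x : EuclideanSpace ℝ (Fin d)}
    (hv : ContDiffAt ℝ 2 (v (Real.arctan t)) ((√(1 + t ^ 2))⁻¹ • x)) :
    coordLaplacian (lensTransform d v t) x
      = (((1 + t ^ 2) ^ (-(d : ℝ) / 4) : ℝ) : ℂ) *
          cexp (I * ((‖x‖ ^ 2 : ℝ) : ℂ) * (t : ℂ) / (2 * (1 + (t : ℂ) ^ 2))) *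
        ((1 + (t : ℂ) ^ 2)⁻¹ * coordLaplacian (v (Real.arctan t)) ((√(1 + t ^ 2))⁻¹ • x)
          + 2 * I * t / (1 + (t : ℂ) ^ 2) * ((√(1 + t ^ 2))⁻¹ : ℝ)
            * fderiv ℝ (v (Real.arctan t)) ((√(1 + t ^ 2))⁻¹ • x) x
          + (I * d * t / (1 + (t : ℂ) ^ 2) - t ^ 2 * ((‖x‖ ^ 2 : ℝ) : ℂ) / (1 + (t : ℂ) ^ 2) ^ 2)
            * v (Real.arctan t) ((√(1 + t ^ 2))⁻¹ • x)) := by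
  set b := (√(1 + t ^ 2))⁻¹
  set β : ℂ := I * t / (2 * (1 + (t : ℂ) ^ 2))
  have hρ : (1 + (t : ℂ) ^ 2) ≠ 0 := by exact_mod_cast (show (1 + t ^ 2) ≠ 0 by positivity)
  have hb : b ^ 2 = (1 + t ^ 2)⁻¹ := by
    rw [inv_pow, Real.sq_sqrt (by positivity)]
  have hform : lensTransform d v t = fun y => (((1 + t ^ 2) ^ (-(d : ℝ) / 4) : ℝ) : ℂ) *
      (v (Real.arctan t) (b • y) * cexp (β * ((‖y‖ ^ 2 : ℝ) : ℂ))) := by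
    ext y
    rw [lensTransform, mul_assoc]
    congr 3
    ring
  have hg : ContDiffAt ℝ 2 (fun y => v (Real.arctan t) (b • y)) x :=
    hv.comp x (contDiffAt_id.const_smul b)
  rw [hform, coordLaplacian_const_mul, coordLaplacian_mul_cexp_mul_norm_sq hg,
    coordLaplacian_comp_smul, fderiv_comp_smul, hb]
  simp only [smul_apply, Complex.real_smul, β]
  push_cast
  field_simp
  ring_nf
  rw [I_sq]
  ring

theorem lensTransform_schrodinger {v : ℝ → EuclideanSpace ℝ (Fin d) → ℂ} {t : ℝ}
    {x : EuclideanSpace ℝ (Fin d)}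
    (hv₁ : DifferentiableAt ℝ (fun p : ℝ × EuclideanSpace ℝ (Fin d) => v p.1 p.2)
      (Real.arctan t, (√(1 + t ^ 2))⁻¹ • x))
    (hv₂ : ContDiffAt ℝ 2 (v (Real.arctan t)) ((√(1 + t ^ 2))⁻¹ • x)) :
    I * deriv (fun t' => lensTransform d v t' x) t
        + (1 / 2 : ℂ) * coordLaplacian (lensTransform d v t) x
      = (((1 + t ^ 2) ^ (-(d : ℝ) / 4) : ℝ) : ℂ) *
          cexp (I * ((‖x‖ ^ 2 : ℝ) : ℂ) * (t : ℂ) / (2 * (1 + (t : ℂ) ^ 2))) / (1 + (t : ℂ) ^ 2) *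
        (I * deriv (fun s => v s ((√(1 + t ^ 2))⁻¹ • x)) (Real.arctan t)
          + (1 / 2 : ℂ) * coordLaplacian (v (Real.arctan t)) ((√(1 + t ^ 2))⁻¹ • x)
          - (1 / 2 : ℂ) * ((‖(√(1 + t ^ 2))⁻¹ • x‖ ^ 2 : ℝ) : ℂ)
            * v (Real.arctan t) ((√(1 + t ^ 2))⁻¹ • x)) := by
  have hρ : (1 + (t : ℂ) ^ 2) ≠ 0 := by exact_mod_cast (show (1 + t ^ 2) ≠ 0 by positivity)
  have hy : ‖(√(1 + t ^ 2))⁻¹ • x‖ ^ 2 = ‖x‖ ^ 2 / (1 + t ^ 2) := by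
    rw [norm_smul, mul_pow, Real.norm_eq_abs, sq_abs, inv_pow, Real.sq_sqrt (by positivity)]
    ring
  rw [(hasDerivAt_lensTransform hv₁).deriv, coordLaplacian_lensTransform hv₂, hy]
  push_cast
  field_simp
  ring_nf
  rw [I_sq]
  ring

theorem lensTransform_zero (v : ℝ → EuclideanSpace ℝ (Fin d) → ℂ) (x : EuclideanSpace ℝ (Fin d)) :
    lensTransform d v 0 x = v 0 x := by
  simp [lensTransform]

end LensTransform

theorem stmt_10_general (d : ℕ) (T : ℝ)
    (v : ℝ → EuclideanSpace ℝ (Fin d) → ℂ)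
    (hv1 : ContDiff ℝ 1 (fun p : ℝ × EuclideanSpace ℝ (Fin d) => v p.1 p.2))
    (hv2 : ∀ s : ℝ, ContDiff ℝ 2 (v s))
    (hveq : ∀ s ∈ Set.Icc (0 : ℝ) (Real.arctan T), ∀ y : EuclideanSpace ℝ (Fin d),
      Complex.I * deriv (fun s' => v s' y) s + (1 / 2 : ℂ) * coordLaplacian (v s) y
        - (1 / 2 : ℂ) * ((‖y‖ ^ 2 : ℝ) : ℂ) * v s y = 0)
    (u : ℝ → EuclideanSpace ℝ (Fin d) → ℂ)
    (hu : ∀ t x, u t x =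
      (((1 + t ^ 2) ^ (-(d : ℝ) / 4) : ℝ) : ℂ) *
        v (Real.arctan t) ((Real.sqrt (1 + t ^ 2))⁻¹ • x) *
        Complex.exp (Complex.I * ((‖x‖ ^ 2 : ℝ) : ℂ) * (t : ℂ) / (2 * (1 + (t : ℂ) ^ 2)))) :
    (∀ t ∈ Set.Icc (0 : ℝ) T, ∀ x : EuclideanSpace ℝ (Fin d),
      Complex.I * deriv (fun t' => u t' x) t + (1 / 2 : ℂ) * coordLaplacian (u t) x = 0) ∧
    (∀ x, u 0 x = v 0 x) := by
  obtain rfl : u = lensTransform d v := funext₂ hu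
  refine ⟨fun t ht x => ?_, lensTransform_zero v⟩
  have hs : Real.arctan t ∈ Set.Icc (0 : ℝ) (Real.arctan T) :=
    ⟨Real.arctan_zero ▸ Real.arctan_strictMono.monotone ht.1,
      Real.arctan_strictMono.monotone ht.2⟩
  rw [lensTransform_schrodinger (hv1.differentiable one_ne_zero _) (hv2 _).contDiffAt,
    hveq _ hs, mul_zero]

/-- Lens transform (formula (5.1)): it maps solutions of the linear Schrödinger equation with
harmonic potential to solutions of the free linear Schrödinger equation. -/
theorem stmt_10 (d : ℕ) (hd : 1 ≤ d) (T : ℝ) (hT0 : 0 < T) (hT1 : T ≤ 1)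
    (v : ℝ → EuclideanSpace ℝ (Fin d) → ℂ)
    (hv1 : ContDiff ℝ 1 (fun p : ℝ × EuclideanSpace ℝ (Fin d) => v p.1 p.2))
    (hv2 : ∀ s : ℝ, ContDiff ℝ 2 (v s))
    (hveq : ∀ s ∈ Set.Icc (0 : ℝ) (Real.arctan T), ∀ y : EuclideanSpace ℝ (Fin d),
      Complex.I * deriv (fun s' => v s' y) s + (1 / 2 : ℂ) * coordLaplacian (v s) y
        - (1 / 2 : ℂ) * ((‖y‖ ^ 2 : ℝ) : ℂ) * v s y = 0)
    (u : ℝ → EuclideanSpace ℝ (Fin d) → ℂ)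
    (hu : ∀ t x, u t x =
      (((1 + t ^ 2) ^ (-(d : ℝ) / 4) : ℝ) : ℂ) *
        v (Real.arctan t) ((Real.sqrt (1 + t ^ 2))⁻¹ • x) *
        Complex.exp (Complex.I * ((‖x‖ ^ 2 : ℝ) : ℂ) * (t : ℂ) / (2 * (1 + (t : ℂ) ^ 2)))) :
    (∀ t ∈ Set.Icc (0 : ℝ) T, ∀ x : EuclideanSpace ℝ (Fin d),
      Complex.I * deriv (fun t' => u t' x) t + (1 / 2 : ℂ) * coordLaplacian (u t) x = 0) ∧
    (∀ x, u 0 x = v 0 x) :=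
  stmt_10_general d T v hv1 hv2 hveq u hu
end
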